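/- For every compactly supported smooth function φ : ℝ → ℝ, setting F(R) := ∫_ℝ χ♯(R,u)·φ(u) du, one has lim_{R→0} F(R) = 0 and lim_{R→0} F′(R) = φ(0); that is, χ♯ attains the initial data χ♯|_{R=0} = 0 and χ♯_R|_{R=0} = δ_{u=0} in the weak sense. -/

import Mathlib

open MeasureTheory Filter

/-- The power series `f(y) = ∑ (−1)^n yⁿ / (16ⁿ (n!)²)`. -/
noncomputable def f (y : ℝ) : ℝ :=
  ∑' n : ℕ, (-1 : ℝ) ^ n * y ^ n / (16 ^ n * (Nat.factorial n : ℝ) ^ 2)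

/-- The isothermal entropy kernel
`χ♯(R,u) = (1/2)·sgn(R)·e^{R/2}·f(u² − R²)` for `|u| < |R|`, and `0` otherwise. -/
noncomputable def chiSharp (R u : ℝ) : ℝ :=
  if |u| < |R| then (1 / 2) * Real.sign R * Real.exp (R / 2) * f (u ^ 2 - R ^ 2) else 0

noncomputable def fc : ℕ → ℝ := fun n => (-1 : ℝ) ^ n / (16 ^ n * (Nat.factorial n : ℝ) ^ 2)

lemma fc_abs (n : ℕ) : |fc n| = 1 / (16 ^ n * (Nat.factorial n : ℝ) ^ 2) := by
  unfold fc
  rw [abs_div, abs_pow, abs_neg, abs_one, one_pow]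
  congr 1
  rw [abs_of_pos]
  positivity

lemma fc_ne (n : ℕ) : fc n ≠ 0 := by
  intro h
  have := fc_abs n
  rw [h, abs_zero] at this
  have h2 : (0:ℝ) < 1 / (16 ^ n * (Nat.factorial n : ℝ) ^ 2) := by positivity
  linarith

lemma fc_ratio : Tendsto (fun n => ‖fc n.succ‖ / ‖fc n‖) atTop (nhds 0) := by
  have h : ∀ n : ℕ, ‖fc n.succ‖ / ‖fc n‖ = 1 / (16 * (n + 1 : ℝ) ^ 2) := by
    intro n
    rw [Real.norm_eq_abs, Real.norm_eq_abs, fc_abs, fc_abs]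
    rw [Nat.factorial_succ]
    push_cast
    have h1 : (0:ℝ) < 16 ^ n * (Nat.factorial n : ℝ) ^ 2 := by positivity
    have h2 : (0:ℝ) < (Nat.factorial n : ℝ) := by positivity
    field_simp
    simp only [Nat.succ_eq_add_one]
    ring
  simp_rw [h]
  apply squeeze_zero (fun n => by positivity) (g := fun n : ℕ => 1 / ((n:ℝ) + 1))
  · intro n
    apply div_le_div_of_nonneg_left (by norm_num) (by positivity)
    nlinarith [sq_nonneg ((n:ℝ)+1), Nat.cast_nonneg (α := ℝ) n]
  · exact tendsto_one_div_add_atTop_nhds_zero_nat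

lemma f_eq_sum : f = (FormalMultilinearSeries.ofScalars ℝ fc).sum := by
  funext y
  rw [← FormalMultilinearSeries.ofScalarsSum, FormalMultilinearSeries.ofScalars_sum_eq]
  apply tsum_congr
  intro n
  unfold fc
  rw [smul_eq_mul]
  ring

lemma f_radius : (FormalMultilinearSeries.ofScalars ℝ fc).radius = ⊤ :=
  FormalMultilinearSeries.ofScalars_radius_eq_top_of_tendsto ℝ fc (Eventually.of_forall fc_ne)
    fc_ratio

lemma f_analytic (y : ℝ) : AnalyticAt ℝ f y := by
  rw [f_eq_sum]
  have h := FormalMultilinearSeries.hasFPowerSeriesOnBall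
    (p := FormalMultilinearSeries.ofScalars ℝ fc) (by rw [f_radius]; exact ENNReal.zero_lt_top)
  exact h.analyticAt_of_mem (by rw [f_radius]; simp)

lemma f_contDiff : ContDiff ℝ (⊤ : ℕ∞) f :=
  contDiff_iff_contDiffAt.2 fun y => (f_analytic y).contDiffAt

lemma f_zero : f 0 = 1 := by
  unfold f
  rw [tsum_eq_single 0]
  · simp
  · intro n hn
    simp [zero_pow hn]

set_option maxHeartbeats 2000000 in
theorem stmt5 (φ : ℝ → ℝ) (hφ : ContDiff ℝ (⊤ : ℕ∞) φ) (hsupp : HasCompactSupport φ) :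
    Tendsto (fun R : ℝ => ∫ u : ℝ, chiSharp R u * φ u) (nhds 0) (nhds 0) ∧
    Tendsto (deriv fun R : ℝ => ∫ u : ℝ, chiSharp R u * φ u) (nhds 0) (nhds (φ 0)) := by
  -- basic regularity facts
  have hfc : Continuous f := f_contDiff.continuous
  have hfd : Differentiable ℝ f := fun y => (f_analytic y).differentiableAt
  have hfdc : Continuous (deriv f) := (contDiff_infty_iff_deriv.1 (f_contDiff.of_le (by simp))).2.continuous
  have hφc : Continuous φ := hφ.continuous
  have hφd : Differentiable ℝ φ := (contDiff_infty_iff_deriv.1 (hφ.of_le (by simp))).1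
  have hφdc : Continuous (deriv φ) := (contDiff_infty_iff_deriv.1 (hφ.of_le (by simp))).2.continuous
  -- the rescaled kernel and its R-derivative
  set g : ℝ → ℝ → ℝ := fun R t => f (R ^ 2 * (t ^ 2 - 1)) * φ (R * t) with hg
  set g' : ℝ → ℝ → ℝ := fun R t =>
    deriv f (R ^ 2 * (t ^ 2 - 1)) * (2 * R * (t ^ 2 - 1)) * φ (R * t) +
    f (R ^ 2 * (t ^ 2 - 1)) * (deriv φ (R * t) * t) with hg'
  have hgc : Continuous fun q : ℝ × ℝ => g q.1 q.2 := by
    apply Continuous.mul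
    · exact hfc.comp (by fun_prop)
    · exact hφc.comp (by fun_prop)
  have hg'c : Continuous fun q : ℝ × ℝ => g' q.1 q.2 := by
    apply Continuous.add
    · exact ((hfdc.comp (by fun_prop)).mul (by fun_prop)).mul (hφc.comp (by fun_prop))
    · exact (hfc.comp (by fun_prop)).mul ((hφdc.comp (by fun_prop)).mul (by fun_prop))
  have hgcont : ∀ R, Continuous (g R) := fun R => hgc.comp (Continuous.prodMk_right R)
  have hg'cont : ∀ R, Continuous (g' R) := fun R => hg'c.comp (Continuous.prodMk_right R)
  have hderiv : ∀ R t : ℝ, HasDerivAt (fun R => g R t) (g' R t) R := by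
    intro R t
    have h1 : HasDerivAt (fun R : ℝ => R ^ 2 * (t ^ 2 - 1)) (2 * R * (t ^ 2 - 1)) R := by
      simpa using (hasDerivAt_pow 2 R).mul_const (t ^ 2 - 1)
    have h2 : HasDerivAt (fun R : ℝ => R * t) t R := by
      simpa using (hasDerivAt_id R).mul_const t
    have h3 := ((hfd _).hasDerivAt).comp R h1
    have h4 := ((hφd _).hasDerivAt).comp R h2
    exact h3.mul h4
  -- bound on the derivative on a compact rectangle
  obtain ⟨M, hM⟩ :=
    ((isCompact_Icc (a := (-2:ℝ)) (b := 2)).prod (isCompact_Icc (a := (-1:ℝ)) (b := 1))).exists_bound_of_continuousOn hg'c.continuousOn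
  have hM0 : 0 ≤ M := le_trans (norm_nonneg _) (hM (0, 0) ⟨by norm_num, by norm_num⟩)
  have hbound : ∀ x t : ℝ, |x| < 2 → t ∈ Set.uIoc (-1:ℝ) 1 → ‖g' x t‖ ≤ M := by
    intro x t hx ht
    rw [Set.uIoc_of_le (by norm_num : (-1:ℝ) ≤ 1)] at ht
    refine hM (x, t) ⟨?_, ?_⟩
    · exact ⟨by linarith [abs_lt.1 hx |>.1], by linarith [abs_lt.1 hx |>.2]⟩
    · exact ⟨le_of_lt ht.1, ht.2⟩
  set G : ℝ → ℝ := fun R => ∫ t in (-1:ℝ)..1, g R t with hGdef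
  set G' : ℝ → ℝ := fun R => ∫ t in (-1:ℝ)..1, g' R t with hG'def
  have hGderiv : ∀ R₀ ∈ Metric.ball (0:ℝ) 1, HasDerivAt G (G' R₀) R₀ := by
    intro R₀ hR₀
    have hR₀' : |R₀| < 1 := by simpa [Real.dist_eq] using hR₀
    have key := intervalIntegral.hasDerivAt_integral_of_dominated_loc_of_deriv_le
      (F := g) (F' := g') (x₀ := R₀) (a := -1) (b := 1) (bound := fun _ => M)
      (μ := volume) (s := Metric.ball R₀ 1) (Metric.ball_mem_nhds R₀ one_pos)
      (Eventually.of_forall fun x => ((hgcont x).aestronglyMeasurable))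
      ((hgcont R₀).intervalIntegrable _ _)
      ((hg'cont R₀).aestronglyMeasurable)
      (Eventually.of_forall fun t ht x hx => by
        refine hbound x t ?_ ht
        have : |x - R₀| < 1 := by simpa [Real.dist_eq] using hx
        calc |x| = |x - R₀ + R₀| := by ring_nf
        _ ≤ |x - R₀| + |R₀| := abs_add_le _ _
        _ < 2 := by linarith)
      intervalIntegrable_const
      (Eventually.of_forall fun t ht x hx => hderiv x t)
    exact key.2
  have hG'bound : ∀ R : ℝ, |R| < 2 → ‖G' R‖ ≤ M * 2 := by
    intro R hR
    have := intervalIntegral.norm_integral_le_of_norm_le_const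
      (C := M) (a := (-1:ℝ)) (b := 1) (f := g' R) (fun t ht => hbound R t hR ht)
    simpa using this.trans (by norm_num)
  -- the key identity
  have hchi : ∀ R u : ℝ, chiSharp R u * φ u =
      Set.indicator (Set.Ioo (-|R|) (|R|))
        (fun u => 1 / 2 * Real.sign R * Real.exp (R / 2) * f (u ^ 2 - R ^ 2) * φ u) u := by
    intro R u
    rw [Set.indicator_apply]
    unfold chiSharp
    by_cases h : |u| < |R|
    · rw [if_pos h, if_pos (by rw [Set.mem_Ioo]; exact abs_lt.1 h)]
    · rw [if_neg h, if_neg (fun hu => h (abs_lt.2 (Set.mem_Ioo.1 hu))), zero_mul]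
  have hFeq : ∀ R : ℝ, (∫ u : ℝ, chiSharp R u * φ u) =
      1 / 2 * Real.exp (R / 2) * (R * G R) := by
    intro R
    have step1 : (∫ u : ℝ, chiSharp R u * φ u) =
        1 / 2 * Real.sign R * Real.exp (R / 2) *
          ∫ u in (-|R|)..(|R|), f (u ^ 2 - R ^ 2) * φ u := by
      simp_rw [hchi R]
      rw [MeasureTheory.integral_indicator measurableSet_Ioo,
        ← MeasureTheory.integral_Ioc_eq_integral_Ioo,
        ← intervalIntegral.integral_of_le (neg_abs_le _ |>.trans (le_abs_self _)),
        ← intervalIntegral.integral_const_mul]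
      congr 1
      funext u
      ring
    rcases lt_trichotomy R 0 with hR | hR | hR
    · have hsub : (∫ u in (-R)..R, f (u ^ 2 - R ^ 2) * φ u) = R * G R := by
        have h := intervalIntegral.integral_comp_mul_left
          (fun u => f (u ^ 2 - R ^ 2) * φ u) (ne_of_lt hR) (a := -1) (b := 1)
        have hGR : G R = ∫ t in (-1:ℝ)..1, f ((R * t) ^ 2 - R ^ 2) * φ (R * t) := by
          apply intervalIntegral.integral_congr
          intro t ht
          simp only [hg]
          ring_nf
        rw [hGR, h, smul_eq_mul, mul_neg_one, mul_one, ← mul_assoc,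
          mul_inv_cancel₀ (ne_of_lt hR), one_mul]
      rw [step1, Real.sign_of_neg hR]
      have : (-|R| : ℝ) = R := by rw [abs_of_neg hR]; ring
      rw [this, abs_of_neg hR, intervalIntegral.integral_symm, hsub]
      ring
    · subst hR
      have h0 : ∀ u : ℝ, chiSharp 0 u = 0 := by
        intro u
        unfold chiSharp
        rw [if_neg]
        simp [abs_nonneg]
      simp [h0]
    · have hsub : (∫ u in (-R)..R, f (u ^ 2 - R ^ 2) * φ u) = R * G R := by
        have h := intervalIntegral.integral_comp_mul_left
          (fun u => f (u ^ 2 - R ^ 2) * φ u) (ne_of_gt hR) (a := -1) (b := 1)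
        have hGR : G R = ∫ t in (-1:ℝ)..1, f ((R * t) ^ 2 - R ^ 2) * φ (R * t) := by
          apply intervalIntegral.integral_congr
          intro t ht
          simp only [hg]
          ring_nf
        rw [hGR, h, smul_eq_mul, mul_neg_one, mul_one, ← mul_assoc,
          mul_inv_cancel₀ (ne_of_gt hR), one_mul]
      rw [step1, Real.sign_of_pos hR, abs_of_pos hR, hsub]
      ring
  have hFfun : (fun R : ℝ => ∫ u : ℝ, chiSharp R u * φ u) =
      fun R : ℝ => 1 / 2 * Real.exp (R / 2) * (R * G R) := funext hFeq
  have hGcont : ContinuousAt G 0 := (hGderiv 0 (by simp)).continuousAt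
  have hG0 : G 0 = 2 * φ 0 := by
    have hc : ∀ t : ℝ, g 0 t = φ 0 := by
      intro t
      simp [hg, f_zero]
    have : G 0 = ∫ t in (-1:ℝ)..1, φ 0 := by
      simp only [hGdef]
      exact intervalIntegral.integral_congr fun t _ => hc t
    rw [this, intervalIntegral.integral_const]
    norm_num
  constructor
  · rw [hFfun]
    have c1 : ContinuousAt (fun R : ℝ => 1 / 2 * Real.exp (R / 2) * (R * G R)) 0 := by
      exact (continuousAt_const.mul
        ((Real.continuous_exp.continuousAt).comp (continuousAt_id.div_const 2))).mul
        (continuousAt_id.mul hGcont)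
    have := c1.tendsto
    simpa using this
  · -- the derivative
    set D : ℝ → ℝ := fun R =>
      (1 / 2 * Real.exp (R / 2) * (1 / 2) * (R * G R) +
        1 / 2 * Real.exp (R / 2) * (G R + R * G' R)) with hD
    have hDd : ∀ R₀ ∈ Metric.ball (0:ℝ) 1,
        HasDerivAt (fun R : ℝ => 1 / 2 * Real.exp (R / 2) * (R * G R)) (D R₀) R₀ := by
      intro R₀ hR₀
      have h1 : HasDerivAt (fun R : ℝ => 1 / 2 * Real.exp (R / 2))
          (1 / 2 * Real.exp (R₀ / 2) * (1 / 2)) R₀ := by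
        have : HasDerivAt (fun R : ℝ => Real.exp (R / 2)) (Real.exp (R₀ / 2) * (1 / 2)) R₀ := by
          have hid : HasDerivAt (fun R : ℝ => R / 2) (1 / 2 : ℝ) R₀ := by
            simpa using (hasDerivAt_id R₀).div_const 2
          exact (Real.hasDerivAt_exp _).comp R₀ hid
        simpa [mul_assoc] using this.const_mul (1 / 2 : ℝ)
      have h2 : HasDerivAt (fun R : ℝ => R * G R) (G R₀ + R₀ * G' R₀) R₀ := by
        have := (hasDerivAt_id R₀).mul (hGderiv R₀ hR₀)
        simpa [Pi.mul_def] using this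
      have := h1.mul h2
      rw [hD]
      exact this
    have hEq : ∀ᶠ R in nhds (0:ℝ),
        deriv (fun R : ℝ => ∫ u : ℝ, chiSharp R u * φ u) R = D R := by
      filter_upwards [Metric.ball_mem_nhds (0:ℝ) one_pos] with R hR
      rw [hFfun]
      exact (hDd R hR).deriv
    have hDtend : Tendsto D (nhds 0) (nhds (φ 0)) := by
      have hA : Tendsto (fun R : ℝ =>
          1 / 2 * Real.exp (R / 2) * (1 / 2) * (R * G R) + 1 / 2 * Real.exp (R / 2) * G R)
          (nhds 0) (nhds (φ 0)) := by
        have cA : ContinuousAt (fun R : ℝ =>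
            1 / 2 * Real.exp (R / 2) * (1 / 2) * (R * G R) + 1 / 2 * Real.exp (R / 2) * G R) 0 := by
          exact (((continuousAt_const.mul
            ((Real.continuous_exp.continuousAt).comp (continuousAt_id.div_const 2))).mul
            continuousAt_const).mul (continuousAt_id.mul hGcont)).add
            ((continuousAt_const.mul
            ((Real.continuous_exp.continuousAt).comp (continuousAt_id.div_const 2))).mul hGcont)
        have := cA.tendsto
        simpa [hG0] using this
      have hB : Tendsto (fun R : ℝ => 1 / 2 * Real.exp (R / 2) * (R * G' R)) (nhds 0)
          (nhds 0) := by
        apply squeeze_zero_norm' (a := fun R : ℝ => 1 / 2 * Real.exp (R / 2) * (|R| * (M * 2)))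
        · filter_upwards [Metric.ball_mem_nhds (0:ℝ) one_pos] with R hR
          have hR' : |R| < 2 := by
            have : |R| < 1 := by simpa [Real.dist_eq] using hR
            linarith
          have h1 : ‖G' R‖ ≤ M * 2 := hG'bound R hR'
          rw [Real.norm_eq_abs] at h1
          calc ‖1 / 2 * Real.exp (R / 2) * (R * G' R)‖
              = 1 / 2 * Real.exp (R / 2) * (|R| * |G' R|) := by
                rw [Real.norm_eq_abs, abs_mul, abs_mul, abs_mul,
                  abs_of_pos (Real.exp_pos _), abs_of_nonneg (by norm_num : (0:ℝ) ≤ 1/2)]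
          _ ≤ 1 / 2 * Real.exp (R / 2) * (|R| * (M * 2)) := by
                apply mul_le_mul_of_nonneg_left
                · exact mul_le_mul_of_nonneg_left h1 (abs_nonneg _)
                · positivity
        · have c2 : ContinuousAt (fun R : ℝ => 1 / 2 * Real.exp (R / 2) * (|R| * (M * 2))) 0 := by
            exact (continuousAt_const.mul
              ((Real.continuous_exp.continuousAt).comp (continuousAt_id.div_const 2))).mul
              ((continuous_abs.continuousAt).mul continuousAt_const)
          have := c2.tendsto
          simpa using this
      have := hA.add hB
      rw [add_zero] at this
      apply this.congr
      intro R
      rw [hD]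
      ring
    exact hDtend.congr' (hEq.mono fun R h => h.symm)
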